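/- arXiv:gr-qc/9909089 — 5 statements merged into one kernel-verified Lean document; each statement's English description precedes it below -/
import Mathlib

section
/- The system of polynomial equations in real variables k, u: { −117k⁴ + 30k² − 1 = 0, −ku + 2kv − u/2 + (3/2)k²u = 0 with v determined so that the coefficient equations of the subcase hold, c₀(k,u,v) = 0 } forces u = 0, where c₀ = −27k⁴u² − 72k³vu + 36k³u² + 96k²v² − 96k²vu + 42k²u² − 24kvu + 12ku² + u². In particular, there is no solution with u ≠ 0. -/
/-- Subcase 0 of the vacuum silent-universe constraint analysis: the real
polynomial system forces `u = 0`. -/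
theorem subcase_zero_forces_u_zero (k u v : ℝ)
    (h1 : -117 * k ^ 4 + 30 * k ^ 2 - 1 = 0)
    (h2 : -(k * u) + 2 * k * v - u / 2 + (3 / 2) * k ^ 2 * u = 0)
    (h3 : -27 * k ^ 4 * u ^ 2 - 72 * k ^ 3 * v * u + 36 * k ^ 3 * u ^ 2
        + 96 * k ^ 2 * v ^ 2 - 96 * k ^ 2 * v * u + 42 * k ^ 2 * u ^ 2
        - 24 * k * v * u + 12 * k * u ^ 2 + u ^ 2 = 0) :
    u = 0 := by
  have key : u ^ 2 * (2752 * k ^ 2 - 64) = 0 := by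
    linear_combination (2704 * k ^ 2) * h3
      + (-129792 * k ^ 3 * v + 194688 * k ^ 4 * u + 64896 * k ^ 3 * u) * h2
      + (1872 * k ^ 2 + 64) * u ^ 2 * h1
  rcases mul_eq_zero.1 key with h | h
  · exact pow_eq_zero_iff (two_ne_zero) |>.1 h
  · exfalso
    have hk : k ^ 2 = 1 / 43 := by linarith
    have : k ^ 4 = (k ^ 2) ^ 2 := by ring
    rw [this, hk] at h1
    norm_num at h1
end

section
/- Let h : I → Matrix (Fin 3) (Fin 3) ℝ be a differentiable family of positive definite symmetric matrices and K : I → Matrix (Fin 3) (Fin 3) ℝ with h' = 2·h·K' where K' denotes K with an index lowered, i.e. h'(t)ᵢⱼ = 2·(h(t)·K(t))ᵢⱼ with h·K symmetric. If K(t) is a diagonal matrix diag(λ₁(t), λ₂(t), λ₃(t)) for all t and h(t₀) is diagonal, then h(t) is diagonal for all t, with hᵢᵢ(t) = hᵢᵢ(t₀)·exp(2∫_{t₀}^t λᵢ(s) ds). -/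
/-!
With `K = diag λ`, the product `h K` has entries `hᵢⱼ λⱼ`, so the matrix equation `h' = 2 h K`
decouples into the scalar linear equations `hᵢⱼ' = 2 λⱼ hᵢⱼ`. Each is solved by
`hᵢⱼ(t) = hᵢⱼ(t₀) exp (2 ∫_{t₀}^t λⱼ)`, since `hᵢⱼ · exp (-2 ∫ λⱼ)` has zero derivative;
hence off-diagonal entries that vanish at `t₀` vanish for all `t`.
-/

open Matrix intervalIntegral Set

attribute [local instance] Matrix.normedAddCommGroup Matrix.normedSpace

theorem hasDerivAt_integral_of_continuousOn_Ioo {c : ℝ → ℝ} {a b t₀ t : ℝ}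
    (hc : ContinuousOn c (Ioo a b)) (ht₀ : t₀ ∈ Ioo a b) (ht : t ∈ Ioo a b) :
    HasDerivAt (fun u => ∫ s in t₀..u, c s) (c t) t :=
  integral_hasDerivAt_right
    ((hc.mono (ordConnected_Ioo.uIcc_subset ht₀ ht)).intervalIntegrable)
    (hc.stronglyMeasurableAtFilter isOpen_Ioo t ht)
    (hc.continuousAt (isOpen_Ioo.mem_nhds ht))

theorem eq_mul_exp_integral_of_hasDerivAt {f c : ℝ → ℝ} {a b t₀ : ℝ} (ht₀ : t₀ ∈ Ioo a b)
    (hc : ContinuousOn c (Ioo a b)) (hf : ∀ t ∈ Ioo a b, HasDerivAt f (c t * f t) t) :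
    ∀ t ∈ Ioo a b, f t = f t₀ * Real.exp (∫ s in t₀..t, c s) := by
  set F : ℝ → ℝ := fun u => ∫ s in t₀..u, c s
  have hg : ∀ t ∈ Ioo a b, HasDerivAt (fun u => f u * Real.exp (-F u)) 0 t := fun t ht => by
    have := (hf t ht).mul (hasDerivAt_integral_of_continuousOn_Ioo hc ht₀ ht).neg.exp
    exact this.congr_deriv (by ring)
  have hconst : ∀ t ∈ Ioo a b, f t * Real.exp (-F t) = f t₀ * Real.exp (-F t₀) :=
    fun t ht => isOpen_Ioo.is_const_of_deriv_eq_zero isPreconnected_Ioo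
      (fun u hu => (hg u hu).differentiableAt.differentiableWithinAt)
      (fun u hu => (hg u hu).deriv) ht ht₀
  intro t ht
  have hF₀ : F t₀ = 0 := integral_same
  calc f t = f t * Real.exp (-F t) * Real.exp (F t) := by
        rw [mul_assoc, ← Real.exp_add, neg_add_cancel, Real.exp_zero, mul_one]
    _ = f t₀ * Real.exp (F t) := by rw [hconst t ht, hF₀, neg_zero, Real.exp_zero, mul_one]

theorem HasDerivAt.apply_of_mul_diagonal {n : Type*} [Fintype n] [DecidableEq n]
    {h : ℝ → Matrix n n ℝ} {d : n → ℝ} {t : ℝ} (hh : HasDerivAt h (h t * diagonal d) t)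
    (i j : n) : HasDerivAt (fun s => h s i j) (d j * h t i j) t := by
  have hij := hasDerivAt_pi.mp (hasDerivAt_pi.mp hh i) j
  rwa [mul_diagonal, mul_comm] at hij

theorem metric_evolution_diagonal_general (a b t₀ : ℝ) (ht₀ : t₀ ∈ Set.Ioo a b)
    (h K : ℝ → Matrix (Fin 3) (Fin 3) ℝ) (l : Fin 3 → ℝ → ℝ)
    (hlcont : ∀ i, ContinuousOn (l i) (Set.Ioo a b))
    (hKdiag : ∀ t ∈ Set.Ioo a b, K t = Matrix.diagonal (fun i => l i t))
    (hev : ∀ t ∈ Set.Ioo a b, HasDerivAt h (2 • (h t * K t)) t)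
    (hdiag0 : (h t₀).IsDiag) :
    ∀ t ∈ Set.Ioo a b, (h t).IsDiag ∧
      ∀ i, h t i i = h t₀ i i * Real.exp (2 * ∫ s in t₀..t, l i s) := by
  have entry (i j : Fin 3) : ∀ t ∈ Ioo a b,
      h t i j = h t₀ i j * Real.exp (2 * ∫ s in t₀..t, l j s) := by
    simp_rw [← integral_const_mul]
    refine eq_mul_exp_integral_of_hasDerivAt ht₀ (continuousOn_const.mul (hlcont j)) fun t ht => ?_
    have hev' : HasDerivAt h (h t * Matrix.diagonal (2 • fun k => l k t)) t := by
      simpa only [hKdiag t ht, diagonal_smul, Matrix.mul_smul] using hev t ht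
    simpa only [Pi.smul_apply, nsmul_eq_mul, Nat.cast_ofNat] using hev'.apply_of_mul_diagonal i j
  intro t ht
  refine ⟨fun i j hij => ?_, fun i => entry i i t ht⟩
  show h t i j = 0
  rw [entry i j t ht, hdiag0 hij, zero_mul]

/-- ADM evolution of the spatial metric: if `∂ₜ h = 2 h K` with `K(t)` a
diagonal matrix `diag (λ₁ t, λ₂ t, λ₃ t)`, `h K` symmetric, and `h(t₀)` a
positive definite symmetric diagonal matrix, then `h(t)` stays diagonal and
`hᵢᵢ(t) = hᵢᵢ(t₀) · exp (2 ∫_{t₀}^t λᵢ)`. -/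
theorem metric_evolution_diagonal (a b t₀ : ℝ) (ht₀ : t₀ ∈ Set.Ioo a b)
    (h K : ℝ → Matrix (Fin 3) (Fin 3) ℝ) (l : Fin 3 → ℝ → ℝ)
    (hlcont : ∀ i, ContinuousOn (l i) (Set.Ioo a b))
    (hKdiag : ∀ t ∈ Set.Ioo a b, K t = Matrix.diagonal (fun i => l i t))
    (hev : ∀ t ∈ Set.Ioo a b, HasDerivAt h (2 • (h t * K t)) t)
    (hsymm : ∀ t ∈ Set.Ioo a b, (h t * K t).IsSymm)
    (hpos : (h t₀).PosDef) (hsym0 : (h t₀).IsSymm) (hdiag0 : (h t₀).IsDiag) :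
    ∀ t ∈ Set.Ioo a b, (h t).IsDiag ∧
      ∀ i, h t i i = h t₀ i i * Real.exp (2 * ∫ s in t₀..t, l i s) :=
  metric_evolution_diagonal_general a b t₀ ht₀ h K l hlcont hKdiag hev hdiag0
end

section
/- Let λ₀ᵃ, λ₁ᵃ : I → ℝ (a = 1,2,3) be C¹ functions satisfying (λ₀ᵃ)' = −λ₁ᵃ − (λ₀ᵃ)², and suppose λ₁¹ + λ₁² + λ₁³ = 0 and (λ₁ᵃ)' = 3λ₁ᵃλ₀ᵃ − 2λ₁ᵃ·(λ₀¹+λ₀²+λ₀³) − (λ₁¹λ₀¹ + λ₁²λ₀² + λ₁³λ₀³) for each a. If on a nonempty open subinterval I₁ ⊆ I one has λ₁¹ ≡ 0, then λ₁²·(λ₀² − λ₀³) ≡ 0 on I₁. -/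
/-- Density-lemma computation for vacuum silent universes: if one eigenvalue
`λ₁¹` of `S` vanishes identically on an open subinterval, the evolution
equations force `λ₁² (λ₀² - λ₀³) ≡ 0` there. -/
theorem vanishing_eigenvalue_forces (a b c d : ℝ)
    (l₀ l₁ : Fin 3 → ℝ → ℝ)
    (hC1 : ∀ i, ∀ t ∈ Set.Ioo a b,
      HasDerivAt (l₀ i) (-(l₁ i t) - (l₀ i t) ^ 2) t)
    (htrace : ∀ t ∈ Set.Ioo a b, l₁ 0 t + l₁ 1 t + l₁ 2 t = 0)
    (hC2 : ∀ i, ∀ t ∈ Set.Ioo a b,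
      HasDerivAt (l₁ i)
        (3 * l₁ i t * l₀ i t - 2 * l₁ i t * (l₀ 0 t + l₀ 1 t + l₀ 2 t)
          - (l₁ 0 t * l₀ 0 t + l₁ 1 t * l₀ 1 t + l₁ 2 t * l₀ 2 t)) t)
    (hsub : Set.Ioo c d ⊆ Set.Ioo a b) (hne : c < d)
    (hvanish : ∀ t ∈ Set.Ioo c d, l₁ 0 t = 0) :
    ∀ t ∈ Set.Ioo c d, l₁ 1 t * (l₀ 1 t - l₀ 2 t) = 0 := by
  intro t ht
  have hmem := hsub ht
  have h0 : HasDerivAt (l₁ 0) 0 t := by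
    have hev : l₁ 0 =ᶠ[nhds t] fun _ => (0 : ℝ) :=
      Filter.eventuallyEq_of_mem (isOpen_Ioo.mem_nhds ht) hvanish
    exact (hasDerivAt_const t (0 : ℝ)).congr_of_eventuallyEq hev
  have h1 := hC2 0 t hmem
  have huniq := h1.unique h0
  have hz := hvanish t ht
  have htr := htrace t hmem
  have h2 : l₁ 2 t = - l₁ 1 t := by linarith
  rw [hz, h2] at huniq; linear_combination -huniq
end

section
/- Define w, u, v, s, k : I → ℝ as C¹ functions satisfying: w' = −w²(sk+s+1), u' = w(usk+us+2s−u²−u), v' = w(vsk+vs+s+3ks−v²−v), k' = w(−ku+2kv−u/2+(3/2)k²u), s' = ws(2sk−1+2s−u/2−2v−(3/2)ku). Then the functions λ₀¹ = w, λ₀² = w(1+u), λ₀³ = w(1+v), λ₁¹ = w²s(k+1), λ₁² = w²s(k−1), λ₁³ = −2w²sk satisfy (λ₀ᵃ)' = −λ₁ᵃ − (λ₀ᵃ)² and (λ₁ᵃ)' = 3λ₁ᵃλ₀ᵃ − 2λ₁ᵃ K − tr(SK) for each a, where K = λ₀¹+λ₀²+λ₀³ and tr(SK) = Σₐ λ₁ᵃλ₀ᵃ.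 -/
/-- The parametrized evolution system (evolfin) reproduces the vacuum
silent-universe eigenvalue evolution equations. -/
theorem parametrization_satisfies_eigenvalue_evolution (a b : ℝ)
    (w u v s k : ℝ → ℝ)
    (hw : ∀ t ∈ Set.Ioo a b,
      HasDerivAt w (-(w t) ^ 2 * (s t * k t + s t + 1)) t)
    (hu : ∀ t ∈ Set.Ioo a b,
      HasDerivAt u (w t * (u t * s t * k t + u t * s t + 2 * s t
        - (u t) ^ 2 - u t)) t)
    (hv : ∀ t ∈ Set.Ioo a b,
      HasDerivAt v (w t * (v t * s t * k t + v t * s t + s t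
        + 3 * k t * s t - (v t) ^ 2 - v t)) t)
    (hk : ∀ t ∈ Set.Ioo a b,
      HasDerivAt k (w t * (-(k t * u t) + 2 * k t * v t - u t / 2
        + (3 / 2) * (k t) ^ 2 * u t)) t)
    (hs : ∀ t ∈ Set.Ioo a b,
      HasDerivAt s (w t * s t * (2 * s t * k t - 1 + 2 * s t - u t / 2
        - 2 * v t - (3 / 2) * k t * u t)) t)
    (l₀ l₁ : Fin 3 → ℝ → ℝ)
    (hl₀ : l₀ = ![fun t => w t, fun t => w t * (1 + u t),
      fun t => w t * (1 + v t)])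
    (hl₁ : l₁ = ![fun t => (w t) ^ 2 * s t * (k t + 1),
      fun t => (w t) ^ 2 * s t * (k t - 1),
      fun t => -2 * (w t) ^ 2 * s t * k t]) :
    ∀ i, ∀ t ∈ Set.Ioo a b,
      HasDerivAt (l₀ i) (-(l₁ i t) - (l₀ i t) ^ 2) t ∧
      HasDerivAt (l₁ i)
        (3 * l₁ i t * l₀ i t - 2 * l₁ i t * (l₀ 0 t + l₀ 1 t + l₀ 2 t)
          - (l₁ 0 t * l₀ 0 t + l₁ 1 t * l₀ 1 t + l₁ 2 t * l₀ 2 t)) t := by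
  subst hl₀ hl₁
  intro i t ht
  have Hw := hw t ht
  have Hu := hu t ht
  have Hv := hv t ht
  have Hk := hk t ht
  have Hs := hs t ht
  have H0 := Hw.fun_mul ((hasDerivAt_const t (1:ℝ)).fun_add Hu)
  have H1 := Hw.fun_mul ((hasDerivAt_const t (1:ℝ)).fun_add Hv)
  have Hw2 : HasDerivAt (fun t => (w t) ^ 2)
      (2 * w t * (-(w t) ^ 2 * (s t * k t + s t + 1))) t := by
    have := Hw.fun_pow 2
    simpa using this
  have H2 : HasDerivAt (fun t => (w t) ^ 2 * s t)
      (2 * w t * (-(w t) ^ 2 * (s t * k t + s t + 1)) * s t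
        + (w t) ^ 2 * (w t * s t * (2 * s t * k t - 1 + 2 * s t - u t / 2
        - 2 * v t - (3 / 2) * k t * u t))) t := Hw2.mul Hs
  have H3 : HasDerivAt (fun t => (w t) ^ 2 * s t * (k t + 1))
      ((2 * w t * (-(w t) ^ 2 * (s t * k t + s t + 1)) * s t
        + (w t) ^ 2 * (w t * s t * (2 * s t * k t - 1 + 2 * s t - u t / 2
        - 2 * v t - (3 / 2) * k t * u t))) * (k t + 1)
        + (w t) ^ 2 * s t * (w t * (-(k t * u t) + 2 * k t * v t - u t / 2
        + (3 / 2) * (k t) ^ 2 * u t))) t :=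
    H2.mul (Hk.add_const 1)
  have H4 : HasDerivAt (fun t => (w t) ^ 2 * s t * (k t - 1))
      ((2 * w t * (-(w t) ^ 2 * (s t * k t + s t + 1)) * s t
        + (w t) ^ 2 * (w t * s t * (2 * s t * k t - 1 + 2 * s t - u t / 2
        - 2 * v t - (3 / 2) * k t * u t))) * (k t - 1)
        + (w t) ^ 2 * s t * (w t * (-(k t * u t) + 2 * k t * v t - u t / 2
        + (3 / 2) * (k t) ^ 2 * u t))) t :=
    H2.mul (Hk.sub_const 1)
  have H5 := (((hasDerivAt_const t (-2:ℝ)).fun_mul Hw2).fun_mul Hs).fun_mul Hk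
  fin_cases i <;>
    refine ⟨?_, ?_⟩ <;>
    simp only [Fin.zero_eta, Fin.mk_one, Fin.reduceFinMk, Fin.isValue,
      Matrix.cons_val_zero, Matrix.cons_val_one, Matrix.head_cons,
      Matrix.cons_val_two, Matrix.tail_cons]
  · convert Hw using 1; ring
  · convert H3 using 1; ring
  · exact H0.congr_deriv (by ring)
  · convert H4 using 1; ring
  · exact H1.congr_deriv (by ring)
  · exact H5.congr_deriv (by ring)
end

section
/- Let Q be a symmetric bilinear tensor field on a Riemannian 3-manifold (V, γ) satisfying the Codacci equation D_[a Q^c_b] = 0, where D is the Levi-Civita connection. Then the Ricci tensor of γ commutes with Q as endomorphisms of each tangent space: R^a_b Q^b_c = Q^a_b R^b_c. -/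
/-- Partial derivative of a scalar function on ℝ³ in the `i`-th coordinate
direction. -/
noncomputable def pd (f : (Fin 3 → ℝ) → ℝ) (i : Fin 3) (x : Fin 3 → ℝ) : ℝ :=
  fderiv ℝ f x (Pi.single i 1)

open scoped Topology ContDiff

namespace CodacciAux

/-! ### Calculus toolbox for `pd` -/

variable {f g : (Fin 3 → ℝ) → ℝ} {x : Fin 3 → ℝ} {i j : Fin 3} {V : Set (Fin 3 → ℝ)}

lemma pd_congr (h : f =ᶠ[𝓝 x] g) (i : Fin 3) : pd f i x = pd g i x := by
  unfold pd; rw [h.fderiv_eq]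

lemma pd_congr_on (hV : IsOpen V) (h : ∀ y ∈ V, f y = g y) (hx : x ∈ V) (i : Fin 3) :
    pd f i x = pd g i x :=
  pd_congr (Filter.eventuallyEq_of_mem (hV.mem_nhds hx) h) i

lemma pd_add (hf : DifferentiableAt ℝ f x) (hg : DifferentiableAt ℝ g x) :
    pd (fun y => f y + g y) i x = pd f i x + pd g i x := by
  unfold pd; rw [fderiv_fun_add hf hg]; simp

lemma pd_sub (hf : DifferentiableAt ℝ f x) (hg : DifferentiableAt ℝ g x) :
    pd (fun y => f y - g y) i x = pd f i x - pd g i x := by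
  unfold pd; rw [fderiv_fun_sub hf hg]; simp

lemma pd_mul (hf : DifferentiableAt ℝ f x) (hg : DifferentiableAt ℝ g x) :
    pd (fun y => f y * g y) i x = pd f i x * g x + f x * pd g i x := by
  unfold pd; rw [fderiv_fun_mul hf hg]; simp; ring

lemma pd_const_mul (hf : DifferentiableAt ℝ f x) (c : ℝ) :
    pd (fun y => c * f y) i x = c * pd f i x := by
  unfold pd; rw [fderiv_const_mul hf]; simp

lemma pd_sum3 {F : Fin 3 → (Fin 3 → ℝ) → ℝ} (h : ∀ k, DifferentiableAt ℝ (F k) x)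
    (i : Fin 3) : pd (fun y => ∑ k, F k y) i x = ∑ k, pd (F k) i x := by
  simp only [Fin.sum_univ_three]
  rw [pd_add ((h 0).fun_add (h 1)) (h 2), pd_add (h 0) (h 1)]

lemma contDiffOn_pd (hV : IsOpen V) (hf : ContDiffOn ℝ ∞ f V) (i : Fin 3) :
    ContDiffOn ℝ ∞ (fun y => pd f i y) V := by
  have h1 : ContDiffOn ℝ ∞ (fderiv ℝ f) V := hf.fderiv_of_isOpen hV (by norm_num)
  exact h1.clm_apply contDiffOn_const

lemma diffAt (hV : IsOpen V) (hf : ContDiffOn ℝ ∞ f V) (hx : x ∈ V) :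
    DifferentiableAt ℝ f x :=
  (hf.contDiffAt (hV.mem_nhds hx)).differentiableAt (by simp)

lemma pd_comm (hV : IsOpen V) (hf : ContDiffOn ℝ ∞ f V) (hx : x ∈ V) (i j : Fin 3) :
    pd (fun y => pd f i y) j x = pd (fun y => pd f j y) i x := by
  have hat : ContDiffAt ℝ 2 f x :=
    (hf.contDiffAt (hV.mem_nhds hx)).of_le (WithTop.coe_le_coe.mpr le_top)
  have hsym := hat.isSymmSndFDerivAt (by simp)
  have hdf : DifferentiableAt ℝ (fderiv ℝ f) x := by
    have h1 : ContDiffOn ℝ 1 (fderiv ℝ f) V :=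
      hf.fderiv_of_isOpen hV (WithTop.coe_le_coe.mpr le_top)
    exact (h1.contDiffAt (hV.mem_nhds hx)).differentiableAt one_ne_zero
  unfold pd
  rw [fderiv_clm_apply hdf (differentiableAt_const _),
      fderiv_clm_apply hdf (differentiableAt_const _)]
  simp [hsym.eq (Pi.single j 1) (Pi.single i 1)]

/-! ### The inverse metric -/

noncomputable def gi (γ : (Fin 3 → ℝ) → Fin 3 → Fin 3 → ℝ) (y : Fin 3 → ℝ) :
    Matrix (Fin 3) (Fin 3) ℝ := (Matrix.of (γ y))⁻¹

variable {γ γinv Q : (Fin 3 → ℝ) → Fin 3 → Fin 3 → ℝ}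

lemma gi_eq (hγinv : ∀ a b, ∑ c, γ x a c * γinv x c b = if a = b then (1:ℝ) else 0) :
    ∀ a b, γinv x a b = gi γ x a b := by
  have hmat : Matrix.of (γ x) * Matrix.of (γinv x) = 1 := by
    ext a b; simp [Matrix.mul_apply, Matrix.one_apply, hγinv a b]
  intro a b
  rw [gi, Matrix.inv_eq_right_inv hmat]; rfl

lemma gi_right (hpos : Matrix.PosDef (Matrix.of (γ x))) :
    ∀ a b, ∑ c, γ x a c * gi γ x c b = if a = b then (1:ℝ) else 0 := by
  have h := Matrix.mul_nonsing_inv (Matrix.of (γ x)) hpos.det_pos.ne'.isUnit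
  intro a b
  have := congrArg (fun M => M a b) h
  simpa [Matrix.mul_apply, Matrix.one_apply, gi] using this

lemma gi_left (hpos : Matrix.PosDef (Matrix.of (γ x))) :
    ∀ a b, ∑ c, gi γ x a c * γ x c b = if a = b then (1:ℝ) else 0 := by
  have h := Matrix.nonsing_inv_mul (Matrix.of (γ x)) hpos.det_pos.ne'.isUnit
  intro a b
  have := congrArg (fun M => M a b) h
  simpa [Matrix.mul_apply, Matrix.one_apply, gi] using this

open Matrix in
lemma gi_symm (hγsymm : ∀ a b, γ x a b = γ x b a) : ∀ a b, gi γ x a b = gi γ x b a := by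
  have ht : (Matrix.of (γ x))ᵀ = Matrix.of (γ x) := by
    ext a b; simp [Matrix.transpose_apply, hγsymm a b]
  intro a b
  conv_lhs => rw [gi, ← ht, ← Matrix.transpose_nonsing_inv]
  rfl

lemma gi_contDiffOn (hV : IsOpen V) (hγC : ∀ a b, ContDiffOn ℝ ∞ (fun y => γ y a b) V)
    (hγpos : ∀ x ∈ V, Matrix.PosDef (Matrix.of (γ x))) :
    ∀ a b, ContDiffOn ℝ ∞ (fun y => gi γ y a b) V := by
  have hdet : ContDiffOn ℝ ∞ (fun y => (Matrix.of (γ y)).det) V := by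
    simp only [Matrix.det_fin_three, Matrix.of_apply]
    repeat' first
      | exact hγC _ _
      | apply ContDiffOn.sub
      | apply ContDiffOn.add
      | apply ContDiffOn.mul
  have hne : ∀ y ∈ V, (Matrix.of (γ y)).det ≠ 0 := fun y hy => (hγpos y hy).det_pos.ne'
  have hadj : ∀ a b, ContDiffOn ℝ ∞ (fun y => (Matrix.of (γ y)).adjugate a b) V := by
    intro a b
    simp only [Matrix.adjugate_fin_three, Matrix.of_apply]
    fin_cases a <;> fin_cases b <;>
      simp only [Matrix.cons_val', Matrix.cons_val_zero, Matrix.cons_val_one, Matrix.head_cons,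
        Matrix.empty_val', Matrix.cons_val_fin_one, Matrix.head_fin_const, Matrix.cons_val_two,
        Matrix.tail_cons] <;>
      (repeat' first
        | exact hγC _ _
        | apply ContDiffOn.sub
        | apply ContDiffOn.add
        | apply ContDiffOn.mul
        | apply ContDiffOn.neg)
  intro a b
  have heq : ∀ y, gi γ y a b = (Matrix.of (γ y)).det⁻¹ * (Matrix.of (γ y)).adjugate a b := by
    intro y
    rw [gi, Matrix.inv_def, Matrix.smul_apply, Ring.inverse_eq_inv', smul_eq_mul]
  simp only [heq]
  exact (hdet.inv hne).mul (hadj a b)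

/-! ### Canonical geometric objects -/

noncomputable def Gl (γ : (Fin 3 → ℝ) → Fin 3 → Fin 3 → ℝ) (y : Fin 3 → ℝ) (g a b : Fin 3) : ℝ :=
  (1/2) * (pd (fun z => γ z g b) a y + pd (fun z => γ z g a) b y - pd (fun z => γ z a b) g y)

noncomputable def Ga (γ : (Fin 3 → ℝ) → Fin 3 → Fin 3 → ℝ) (y : Fin 3 → ℝ) (c a b : Fin 3) : ℝ :=
  ∑ d, gi γ y c d * Gl γ y d a b

noncomputable def qq (γ Q : (Fin 3 → ℝ) → Fin 3 → Fin 3 → ℝ) (y : Fin 3 → ℝ) (a b : Fin 3) : ℝ :=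
  ∑ d, gi γ y a d * Q y d b

noncomputable def Sc (γ Q : (Fin 3 → ℝ) → Fin 3 → Fin 3 → ℝ) (y : Fin 3 → ℝ) (a b c : Fin 3) : ℝ :=
  pd (fun z => qq γ Q z b c) a y
    + ∑ e, (Ga γ y b a e * qq γ Q y e c - Ga γ y e a c * qq γ Q y b e)

noncomputable def Rm (γ : (Fin 3 → ℝ) → Fin 3 → Fin 3 → ℝ) (y : Fin 3 → ℝ) (c e a d : Fin 3) : ℝ :=
  pd (fun z => Ga γ z c d e) a y - pd (fun z => Ga γ z c a e) d y
    + ∑ f, (Ga γ y c a f * Ga γ y f d e - Ga γ y c d f * Ga γ y f a e)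

noncomputable def Rc (γ : (Fin 3 → ℝ) → Fin 3 → Fin 3 → ℝ) (y : Fin 3 → ℝ) (e d : Fin 3) : ℝ :=
  ∑ a, Rm γ y a e a d

noncomputable def RL (γ : (Fin 3 → ℝ) → Fin 3 → Fin 3 → ℝ) (y : Fin 3 → ℝ) (g e a d : Fin 3) : ℝ :=
  ∑ c, γ y g c * Rm γ y c e a d

section Smoothness

variable (hV : IsOpen V) (hγC : ∀ a b, ContDiffOn ℝ ∞ (fun y => γ y a b) V)
  (hQC : ∀ a b, ContDiffOn ℝ ∞ (fun y => Q y a b) V)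
  (hγpos : ∀ x ∈ V, Matrix.PosDef (Matrix.of (γ x)))

include hV hγC

lemma Gl_contDiffOn : ∀ g a b, ContDiffOn ℝ ∞ (fun y => Gl γ y g a b) V := fun g a b =>
  contDiffOn_const.mul (((contDiffOn_pd hV (hγC g b) a).add
    (contDiffOn_pd hV (hγC g a) b)).sub (contDiffOn_pd hV (hγC a b) g))

include hγpos in
lemma Ga_contDiffOn : ∀ c a b, ContDiffOn ℝ ∞ (fun y => Ga γ y c a b) V := fun c a b =>
  ContDiffOn.sum fun d _ =>
    (gi_contDiffOn hV hγC hγpos c d).mul (Gl_contDiffOn hV hγC d a b)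

include hγpos hQC in
lemma qq_contDiffOn : ∀ a b, ContDiffOn ℝ ∞ (fun y => qq γ Q y a b) V := fun a b =>
  ContDiffOn.sum fun d _ => (gi_contDiffOn hV hγC hγpos a d).mul (hQC d b)

include hγpos hQC in
lemma Sc_contDiffOn : ∀ a b c, ContDiffOn ℝ ∞ (fun y => Sc γ Q y a b c) V := fun a b c =>
  (contDiffOn_pd hV (qq_contDiffOn hV hγC hQC hγpos b c) a).add
    (ContDiffOn.sum fun e _ =>
      ((Ga_contDiffOn hV hγC hγpos b a e).mul (qq_contDiffOn hV hγC hQC hγpos e c)).sub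
        ((Ga_contDiffOn hV hγC hγpos e a c).mul (qq_contDiffOn hV hγC hQC hγpos b e)))

end Smoothness

section Pointwise

variable (hV : IsOpen V) (hγC : ∀ a b, ContDiffOn ℝ ∞ (fun y => γ y a b) V)
  (hQC : ∀ a b, ContDiffOn ℝ ∞ (fun y => Q y a b) V)
  (hγpos : ∀ x ∈ V, Matrix.PosDef (Matrix.of (γ x)))
  (hγsymm : ∀ y ∈ V, ∀ a b, γ y a b = γ y b a)
  (hx : x ∈ V)

include hV hγsymm hx in
lemma Gl_symm : ∀ g a b, Gl γ x g a b = Gl γ x g b a := by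
  intro g a b
  have e1 : pd (fun z => γ z a b) g x = pd (fun z => γ z b a) g x :=
    pd_congr_on hV (fun y hy => hγsymm y hy a b) hx g
  unfold Gl; rw [e1]; ring

include hV hγsymm hx in
lemma Ga_symm : ∀ c a b, Ga γ x c a b = Ga γ x c b a := by
  intro c a b
  unfold Ga
  exact Finset.sum_congr rfl fun d _ => by rw [Gl_symm hV hγsymm hx d a b]

include hV hγsymm hx in
lemma compat : ∀ g c a, pd (fun z => γ z g c) a x = Gl γ x g a c + Gl γ x c a g := by
  intro g c a
  have e1 : pd (fun z => γ z c g) a x = pd (fun z => γ z g c) a x :=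
    pd_congr_on hV (fun y hy => hγsymm y hy c g) hx a
  have e2 : pd (fun z => γ z a g) c x = pd (fun z => γ z g a) c x :=
    pd_congr_on hV (fun y hy => hγsymm y hy a g) hx c
  have e3 : pd (fun z => γ z c a) g x = pd (fun z => γ z a c) g x :=
    pd_congr_on hV (fun y hy => hγsymm y hy c a) hx g
  unfold Gl; rw [e1, e2, e3]; ring

include hγpos in
lemma gaGl : ∀ y ∈ V, ∀ g d e, ∑ c, γ y g c * Ga γ y c d e = Gl γ y g d e := by
  intro y hy g d e
  calc ∑ c, γ y g c * Ga γ y c d e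
      = ∑ c, ∑ h, γ y g c * gi γ y c h * Gl γ y h d e := by
        simp [Ga, Finset.mul_sum, mul_assoc]
    _ = ∑ h, (∑ c, γ y g c * gi γ y c h) * Gl γ y h d e := by
        rw [Finset.sum_comm]; simp [Finset.sum_mul]
    _ = Gl γ y g d e := by
        simp only [gi_right (hγpos y hy)]
        simp [ite_mul]

include hγpos in
lemma Rm_eq : ∀ y ∈ V, ∀ c e a d, Rm γ y c e a d = ∑ h, gi γ y c h * RL γ y h e a d := by
  intro y hy c e a d
  calc Rm γ y c e a d = ∑ u, (if c = u then (1:ℝ) else 0) * Rm γ y u e a d := by simp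
    _ = ∑ u, (∑ h, gi γ y c h * γ y h u) * Rm γ y u e a d := by
        simp only [gi_left (hγpos y hy)]
    _ = ∑ h, gi γ y c h * RL γ y h e a d := by
        simp only [Finset.sum_mul, RL, Finset.mul_sum]
        rw [Finset.sum_comm]
        exact Finset.sum_congr rfl fun h _ => Finset.sum_congr rfl fun u _ => by ring

include hγpos in
lemma qq_eta : ∀ y ∈ V, ∀ f e2, ∑ d, γ y f d * qq γ Q y d e2 = Q y f e2 := by
  intro y hy f e2
  calc ∑ d, γ y f d * qq γ Q y d e2
      = ∑ h, (∑ d, γ y f d * gi γ y d h) * Q y h e2 := by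
        simp only [qq, Finset.mul_sum]
        rw [Finset.sum_comm]
        exact Finset.sum_congr rfl fun h _ => by
          rw [Finset.sum_mul]; exact Finset.sum_congr rfl fun d _ => by ring
    _ = Q y f e2 := by
        simp only [gi_right (hγpos y hy)]
        simp [ite_mul]

section Deriv

variable (hdγ : ∀ s t, DifferentiableAt ℝ (fun y => γ y s t) x)
  (hdpdγ : ∀ s t u, DifferentiableAt ℝ (fun y => pd (fun z => γ z s t) u y) x)
  (hdGa : ∀ c a b, DifferentiableAt ℝ (fun y => Ga γ y c a b) x)
  (hdqq : ∀ a b, DifferentiableAt ℝ (fun y => qq γ Q y a b) x)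
  (hdpdqq : ∀ b c u, DifferentiableAt ℝ (fun y => pd (fun z => qq γ Q z b c) u y) x)

include hdpdqq hdGa hdqq in
lemma pd_Sc (d a b c : Fin 3) :
    pd (fun y => Sc γ Q y a b c) d x =
      pd (fun y => pd (fun z => qq γ Q z b c) a y) d x
      + ∑ e, (pd (fun y => Ga γ y b a e) d x * qq γ Q x e c
            + Ga γ x b a e * pd (fun y => qq γ Q y e c) d x
            - (pd (fun y => Ga γ y e a c) d x * qq γ Q x b e
            + Ga γ x e a c * pd (fun y => qq γ Q y b e) d x)) := by
  have hsum : ∀ e : Fin 3, DifferentiableAt ℝ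
      (fun y => Ga γ y b a e * qq γ Q y e c - Ga γ y e a c * qq γ Q y b e) x :=
    fun e => ((hdGa b a e).mul (hdqq e c)).sub ((hdGa e a c).mul (hdqq b e))
  have h0 : (fun y => Sc γ Q y a b c) = (fun y => pd (fun z => qq γ Q z b c) a y
      + ∑ e, (Ga γ y b a e * qq γ Q y e c - Ga γ y e a c * qq γ Q y b e)) := rfl
  rw [h0, pd_add (hdpdqq b c a) (DifferentiableAt.fun_sum (fun e _ => hsum e)), pd_sum3 hsum d]
  congr 1
  refine Finset.sum_congr rfl fun e _ => ?_
  rw [pd_sub ((hdGa b a e).fun_mul (hdqq e c)) ((hdGa e a c).fun_mul (hdqq b e)),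
      pd_mul (hdGa b a e) (hdqq e c), pd_mul (hdGa e a c) (hdqq b e)]

include hγpos hdγ hdGa in
lemma pdGa_fact (g d e a : Fin 3) (hx : x ∈ V) (hV : IsOpen V) :
    ∑ c, γ x g c * pd (fun y => Ga γ y c d e) a x =
      pd (fun y => Gl γ y g d e) a x
        - ∑ c, pd (fun y => γ y g c) a x * Ga γ x c d e := by
  have hL : pd (fun y => ∑ c, γ y g c * Ga γ y c d e) a x
      = ∑ c, (pd (fun y => γ y g c) a x * Ga γ x c d e
            + γ x g c * pd (fun y => Ga γ y c d e) a x) := by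
    rw [pd_sum3 (fun c => (hdγ g c).fun_mul (hdGa c d e)) a]
    exact Finset.sum_congr rfl fun c _ => pd_mul (hdγ g c) (hdGa c d e)
  have hR : pd (fun y => ∑ c, γ y g c * Ga γ y c d e) a x
      = pd (fun y => Gl γ y g d e) a x :=
    pd_congr_on hV (fun y hy => gaGl hγpos y hy g d e) hx a
  rw [Finset.sum_add_distrib] at hL
  have := hR.symm.trans hL
  linarith [this]

include hdpdγ in
lemma pd_Gl (g d e a : Fin 3) :
    pd (fun y => Gl γ y g d e) a x =
      (1/2) * (pd (fun y => pd (fun z => γ z g e) d y) a x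
             + pd (fun y => pd (fun z => γ z g d) e y) a x
             - pd (fun y => pd (fun z => γ z d e) g y) a x) := by
  have h0 : (fun y => Gl γ y g d e) = (fun y => (1/2) * (pd (fun z => γ z g e) d y
      + pd (fun z => γ z g d) e y - pd (fun z => γ z d e) g y)) := rfl
  rw [h0, pd_const_mul (((hdpdγ g e d).fun_add (hdpdγ g d e)).fun_sub (hdpdγ d e g)),
      pd_sub ((hdpdγ g e d).fun_add (hdpdγ g d e)) (hdpdγ d e g),
      pd_add (hdpdγ g e d) (hdpdγ g d e)]

end Deriv
end Pointwise

section Curvature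

variable (hV : IsOpen V) (hγC : ∀ a b, ContDiffOn ℝ ∞ (fun y => γ y a b) V)
  (hγpos : ∀ x ∈ V, Matrix.PosDef (Matrix.of (γ x)))
  (hγsymm : ∀ y ∈ V, ∀ a b, γ y a b = γ y b a)
  (hx : x ∈ V)

/-- second partial of a metric coefficient -/
noncomputable def D2 (γ : (Fin 3 → ℝ) → Fin 3 → Fin 3 → ℝ) (x : Fin 3 → ℝ) (s t u v : Fin 3) : ℝ :=
  pd (fun y => pd (fun z => γ z s t) u y) v x

include hV hγsymm hx in
lemma D2_flip (s t u v : Fin 3) : D2 γ x s t u v = D2 γ x t s u v := by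
  unfold D2
  exact pd_congr_on hV
    (fun y hy => pd_congr_on hV (fun z hz => hγsymm z hz s t) hy u) hx v

include hV hγC hx in
lemma D2_comm (s t u v : Fin 3) : D2 γ x s t u v = D2 γ x s t v u :=
  pd_comm hV (hγC s t) hx u v

include hV hγC hγpos hγsymm hx in
lemma RL_formula (g e a d : Fin 3) :
    RL γ x g e a d =
      (1/2) * (D2 γ x g d e a - D2 γ x d e g a - D2 γ x g a e d + D2 γ x a e g d)
      + ∑ c, (Gl γ x c d g * Ga γ x c a e - Gl γ x c a g * Ga γ x c d e) := by
  have hdγ : ∀ s t, DifferentiableAt ℝ (fun y => γ y s t) x :=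
    fun s t => diffAt hV (hγC s t) hx
  have hdpdγ : ∀ s t u, DifferentiableAt ℝ (fun y => pd (fun z => γ z s t) u y) x :=
    fun s t u => diffAt hV (contDiffOn_pd hV (hγC s t) u) hx
  have hdGa : ∀ c a b, DifferentiableAt ℝ (fun y => Ga γ y c a b) x :=
    fun c a b => diffAt hV (Ga_contDiffOn hV hγC hγpos c a b) hx
  have H1 := pdGa_fact hγpos hdγ hdGa g d e a hx hV
  have H2 := pdGa_fact hγpos hdγ hdGa g a e d hx hV
  have H6 := pd_Gl hdpdγ g d e a
  have H7 := pd_Gl hdpdγ g a e d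
  have H3 : ∀ f, ∑ c, γ x g c * Ga γ x c a f = Gl γ x g a f := fun f => gaGl hγpos x hx g a f
  have H4 : ∀ f, ∑ c, γ x g c * Ga γ x c d f = Gl γ x g d f := fun f => gaGl hγpos x hx g d f
  have H5 : ∀ c u, pd (fun z => γ z g c) u x = Gl γ x g u c + Gl γ x c u g :=
    fun c u => compat hV hγsymm hx g c u
  have hcomm : pd (fun y => pd (fun z => γ z g e) d y) a x
      = pd (fun y => pd (fun z => γ z g e) a y) d x := pd_comm hV (hγC g e) hx d a
  simp only [RL, Rm, D2, Fin.sum_univ_three] at *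
  linear_combination H1 - H2 + H6 - H7
    + Ga γ x 0 d e * H3 0 + Ga γ x 1 d e * H3 1 + Ga γ x 2 d e * H3 2
    - Ga γ x 0 a e * H4 0 - Ga γ x 1 a e * H4 1 - Ga γ x 2 a e * H4 2
    - Ga γ x 0 d e * H5 0 a - Ga γ x 1 d e * H5 1 a - Ga γ x 2 d e * H5 2 a
    + Ga γ x 0 a e * H5 0 d + Ga γ x 1 a e * H5 1 d + Ga γ x 2 a e * H5 2 d
    + (1/2) * hcomm

end Curvature

section Pair

variable (hV : IsOpen V) (hγC : ∀ a b, ContDiffOn ℝ ∞ (fun y => γ y a b) V)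
  (hγpos : ∀ x ∈ V, Matrix.PosDef (Matrix.of (γ x)))
  (hγsymm : ∀ y ∈ V, ∀ a b, γ y a b = γ y b a)
  (hx : x ∈ V)

include hV hγC hγpos hγsymm hx in
lemma RL_pair (g e a d : Fin 3) : RL γ x g e a d = RL γ x a d g e := by
  rw [RL_formula hV hγC hγpos hγsymm hx g e a d,
      RL_formula hV hγC hγpos hγsymm hx a d g e]
  have hGl : ∀ k u v, Gl γ x k u v = Gl γ x k v u := fun k u v => Gl_symm hV hγsymm hx k u v
  have hgi : ∀ u v, gi γ x u v = gi γ x v u := gi_symm (fun u v => hγsymm x hx u v)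
  have hf1 : D2 γ x g d e a = D2 γ x d g a e := by
    rw [D2_flip hV hγsymm hx, D2_comm hV hγC hx]
  have hf2 : D2 γ x d e g a = D2 γ x e d a g := by
    rw [D2_flip hV hγsymm hx, D2_comm hV hγC hx]
  have hf3 : D2 γ x g a e d = D2 γ x a g d e := by
    rw [D2_flip hV hγsymm hx, D2_comm hV hγC hx]
  have hf4 : D2 γ x a e g d = D2 γ x e a d g := by
    rw [D2_flip hV hγsymm hx, D2_comm hV hγC hx]
  simp only [Ga, Fin.sum_univ_three]
  have hf5 : D2 γ x d g a e = D2 γ x g d a e := D2_flip hV hγsymm hx d g a e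
  have hf6 : D2 γ x e a d g = D2 γ x a e d g := D2_flip hV hγsymm hx e a d g
  simp only [hGl, hgi]
  linear_combination (1/2) * hf1 - (1/2) * hf2 - (1/2) * hf3 + (1/2) * hf4
    + (1/2) * hf5 + (1/2) * hf6

end Pair

section Ricci

variable (hV : IsOpen V) (hγC : ∀ a b, ContDiffOn ℝ ∞ (fun y => γ y a b) V)
  (hQC : ∀ a b, ContDiffOn ℝ ∞ (fun y => Q y a b) V)
  (hγpos : ∀ x ∈ V, Matrix.PosDef (Matrix.of (γ x)))
  (hγsymm : ∀ y ∈ V, ∀ a b, γ y a b = γ y b a)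
  (hx : x ∈ V)

include hV hγC hQC hγpos hγsymm hx in
lemma ricci_identity (d a b c : Fin 3) :
    (pd (fun y => Sc γ Q y a b c) d x
       + ∑ e, (Ga γ x b d e * Sc γ Q x a e c - Ga γ x e d a * Sc γ Q x e b c
               - Ga γ x e d c * Sc γ Q x a b e))
    - (pd (fun y => Sc γ Q y d b c) a x
       + ∑ e, (Ga γ x b a e * Sc γ Q x d e c - Ga γ x e a d * Sc γ Q x e b c
               - Ga γ x e a c * Sc γ Q x d b e))
    = ∑ e, (Rm γ x b e d a * qq γ Q x e c - Rm γ x e c d a * qq γ Q x b e) := by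
  have hdGa : ∀ c a b, DifferentiableAt ℝ (fun y => Ga γ y c a b) x :=
    fun c a b => diffAt hV (Ga_contDiffOn hV hγC hγpos c a b) hx
  have hdqq : ∀ a b, DifferentiableAt ℝ (fun y => qq γ Q y a b) x :=
    fun a b => diffAt hV (qq_contDiffOn hV hγC hQC hγpos a b) hx
  have hdpdqq : ∀ b c u, DifferentiableAt ℝ (fun y => pd (fun z => qq γ Q z b c) u y) x :=
    fun b c u => diffAt hV (contDiffOn_pd hV (qq_contDiffOn hV hγC hQC hγpos b c) u) hx
  have hGaS : ∀ k u v, Ga γ x k u v = Ga γ x k v u :=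
    fun k u v => Ga_symm hV hγsymm hx k u v
  have hschwarz : pd (fun y => pd (fun z => qq γ Q z b c) a y) d x
      = pd (fun y => pd (fun z => qq γ Q z b c) d y) a x :=
    pd_comm hV (qq_contDiffOn hV hγC hQC hγpos b c) hx a d
  rw [pd_Sc hdGa hdqq hdpdqq d a b c, pd_Sc hdGa hdqq hdpdqq a d b c, hschwarz]
  simp only [Sc, Rm, Fin.sum_univ_three]
  simp only [hGaS]
  ring

end Ricci

section Transfers

variable {γinv Ric : (Fin 3 → ℝ) → Fin 3 → Fin 3 → ℝ}
  {Γ : (Fin 3 → ℝ) → Fin 3 → Fin 3 → Fin 3 → ℝ}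
  {Qmix : (Fin 3 → ℝ) → Fin 3 → Fin 3 → ℝ}
variable (hV : IsOpen V)
  (hγinv : ∀ x ∈ V, ∀ a b, ∑ c, γ x a c * γinv x c b = if a = b then (1:ℝ) else 0)
  (hΓ : ∀ x ∈ V, ∀ c a b, Γ x c a b =
      (1 / 2) * ∑ d, γinv x c d *
        (pd (fun y => γ y d b) a x + pd (fun y => γ y d a) b x
          - pd (fun y => γ y a b) d x))
  (hQmix : ∀ x, ∀ a b, Qmix x a b = ∑ d, γinv x a d * Q x d b)

include hγinv in
lemma tr_gi : ∀ y ∈ V, ∀ a b, γinv y a b = gi γ y a b :=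
  fun y hy => gi_eq (hγinv y hy)

include hγinv hΓ in
lemma tr_Ga : ∀ y ∈ V, ∀ c a b, Γ y c a b = Ga γ y c a b := by
  intro y hy c a b
  rw [hΓ y hy c a b, Ga, Finset.mul_sum]
  refine Finset.sum_congr rfl fun d _ => ?_
  rw [tr_gi hγinv y hy c d, Gl]
  ring

include hγinv hQmix in
lemma tr_qq : ∀ y ∈ V, ∀ a b, Qmix y a b = qq γ Q y a b := by
  intro y hy a b
  rw [hQmix y a b, qq]
  exact Finset.sum_congr rfl fun d _ => by rw [tr_gi hγinv y hy a d]

section WithRic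
variable (hRic : ∀ x ∈ V, ∀ b d, Ric x b d =
      ∑ a, (pd (fun y => Γ y a d b) a x - pd (fun y => Γ y a a b) d x
        + ∑ e, (Γ x a a e * Γ x e d b - Γ x a d e * Γ x e a b)))

include hV hγinv hΓ hRic in
lemma tr_Rc : ∀ y ∈ V, ∀ b d, Ric y b d = Rc γ y b d := by
  intro y hy b d
  rw [hRic y hy b d, Rc]
  refine Finset.sum_congr rfl fun a _ => ?_
  rw [Rm]
  have e1 : pd (fun z => Γ z a d b) a y = pd (fun z => Ga γ z a d b) a y :=
    pd_congr_on hV (fun z hz => tr_Ga hγinv hΓ z hz a d b) hy a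
  have e2 : pd (fun z => Γ z a a b) d y = pd (fun z => Ga γ z a a b) d y :=
    pd_congr_on hV (fun z hz => tr_Ga hγinv hΓ z hz a a b) hy d
  rw [e1, e2]
  congr 1
  refine Finset.sum_congr rfl fun e _ => ?_
  rw [tr_Ga hγinv hΓ y hy a a e, tr_Ga hγinv hΓ y hy e d b,
      tr_Ga hγinv hΓ y hy a d e, tr_Ga hγinv hΓ y hy e a b]
end WithRic

section WithCodacci
variable (hCodacci : ∀ x ∈ V, ∀ a b c,
      pd (fun y => Qmix y b c) a x
        + ∑ e, (Γ x b a e * Qmix x e c - Γ x e a c * Qmix x b e) =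
      pd (fun y => Qmix y b a) c x
        + ∑ e, (Γ x b c e * Qmix x e a - Γ x e c a * Qmix x b e))

include hV hγinv hΓ hQmix hCodacci in
lemma Sc_symmetric : ∀ y ∈ V, ∀ a b c, Sc γ Q y a b c = Sc γ Q y c b a := by
  intro y hy a b c
  have key : ∀ a c, Sc γ Q y a b c = pd (fun z => Qmix z b c) a y
      + ∑ e, (Γ y b a e * Qmix y e c - Γ y e a c * Qmix y b e) := by
    intro a c
    rw [Sc]
    have e1 : pd (fun z => qq γ Q z b c) a y = pd (fun z => Qmix z b c) a y :=
      (pd_congr_on hV (fun z hz => tr_qq hγinv hQmix z hz b c) hy a).symm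
    rw [e1]
    congr 1
    refine Finset.sum_congr rfl fun e _ => ?_
    rw [tr_Ga hγinv hΓ y hy b a e, tr_qq hγinv hQmix y hy e c,
        tr_Ga hγinv hΓ y hy e a c, tr_qq hγinv hQmix y hy b e]
  rw [key a c, key c a, hCodacci y hy a b c]
end WithCodacci

end Transfers

section Cyclic

variable (hV : IsOpen V) (hγC : ∀ a b, ContDiffOn ℝ ∞ (fun y => γ y a b) V)
  (hQC : ∀ a b, ContDiffOn ℝ ∞ (fun y => Q y a b) V)
  (hγpos : ∀ x ∈ V, Matrix.PosDef (Matrix.of (γ x)))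
  (hγsymm : ∀ y ∈ V, ∀ a b, γ y a b = γ y b a)
  (hScS : ∀ y ∈ V, ∀ a b c, Sc γ Q y a b c = Sc γ Q y c b a)
  (hx : x ∈ V)

include hV hScS hx in
lemma Tsymm (b u v w : Fin 3) :
    pd (fun y => Sc γ Q y v b w) u x
      + ∑ e, (Ga γ x b u e * Sc γ Q x v e w - Ga γ x e u v * Sc γ Q x e b w
              - Ga γ x e u w * Sc γ Q x v b e)
    = pd (fun y => Sc γ Q y w b v) u x
      + ∑ e, (Ga γ x b u e * Sc γ Q x w e v - Ga γ x e u w * Sc γ Q x e b v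
              - Ga γ x e u v * Sc γ Q x w b e) := by
  have e1 : pd (fun y => Sc γ Q y v b w) u x = pd (fun y => Sc γ Q y w b v) u x :=
    pd_congr_on hV (fun z hz => hScS z hz v b w) hx u
  rw [e1]
  congr 1
  refine Finset.sum_congr rfl fun e _ => ?_
  rw [hScS x hx v e w, hScS x hx e b w, hScS x hx v b e]
  ring

include hV hγC hQC hγpos hγsymm hScS hx in
lemma cyclic_Rm (b d a c : Fin 3) :
    (∑ e, (Rm γ x b e d a * qq γ Q x e c - Rm γ x e c d a * qq γ Q x b e))
    + (∑ e, (Rm γ x b e a c * qq γ Q x e d - Rm γ x e d a c * qq γ Q x b e))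
    + (∑ e, (Rm γ x b e c d * qq γ Q x e a - Rm γ x e a c d * qq γ Q x b e)) = 0 := by
  have h1 := ricci_identity hV hγC hQC hγpos hγsymm hx d a b c
  have h2 := ricci_identity hV hγC hQC hγpos hγsymm hx a c b d
  have h3 := ricci_identity hV hγC hQC hγpos hγsymm hx c d b a
  have t1 := Tsymm hV hScS hx b a d c
  have t2 := Tsymm hV hScS hx b c a d
  have t3 := Tsymm hV hScS hx b d c a
  linear_combination -h1 - h2 - h3 - t1 - t2 - t3

lemma Rm_antisym (u v s t : Fin 3) : Rm γ x u v s t = -Rm γ x u v t s := by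
  simp only [Rm, Fin.sum_univ_three]; ring

include hV hγC hQC hγpos hγsymm hScS hx in
lemma contraction (a c : Fin 3) :
    (∑ e, Rc γ x e a * qq γ Q x e c) - (∑ e, Rc γ x e c * qq γ Q x e a)
    = ∑ d, ∑ e, qq γ Q x d e * (Rm γ x e c d a + Rm γ x e a c d) := by
  have h0 := cyclic_Rm hV hγC hQC hγpos hγsymm hScS hx 0 0 a c
  have h1 := cyclic_Rm hV hγC hQC hγpos hγsymm hScS hx 1 1 a c
  have h2 := cyclic_Rm hV hγC hQC hγpos hγsymm hScS hx 2 2 a c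
  have han : ∀ u v k, Rm γ x u v c k = -Rm γ x u v k c := fun u v k => Rm_antisym u v c k
  simp only [Rc, Fin.sum_univ_three] at *
  simp only [han] at h0 h1 h2 ⊢
  linear_combination h0 + h1 + h2

end Cyclic

section QuadZero

variable (hV : IsOpen V) (hγC : ∀ a b, ContDiffOn ℝ ∞ (fun y => γ y a b) V)
  (hγpos : ∀ x ∈ V, Matrix.PosDef (Matrix.of (γ x)))
  (hγsymm : ∀ y ∈ V, ∀ a b, γ y a b = γ y b a)
  (hQsymm : ∀ y ∈ V, ∀ a b, Q y a b = Q y b a)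
  (hx : x ∈ V)

include hV hγC hγpos hγsymm hQsymm hx in
lemma quad_zero (a c : Fin 3) :
    ∑ d, ∑ e, qq γ Q x d e * (Rm γ x e c d a + Rm γ x e a c d) = 0 := by
  have han : ∀ u v k, Rm γ x u v c k = -Rm γ x u v k c := fun u v k => Rm_antisym u v c k
  have hpair : ∀ i j, RL γ x i a j c = RL γ x j c i a :=
    fun i j => RL_pair hV hγC hγpos hγsymm hx i a j c
  have hgi : ∀ u v, gi γ x u v = gi γ x v u := gi_symm (fun u v => hγsymm x hx u v)
  have hQs : ∀ u v, Q x u v = Q x v u := fun u v => hQsymm x hx u v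
  simp only [han]
  simp only [Rm_eq hγpos x hx]
  simp only [qq, Fin.sum_univ_three]
  simp only [hpair]
  simp only [hgi, hQs]
  ring

include hV hγC hγpos hγsymm hx in
lemma Rc_symm (b d : Fin 3) : Rc γ x b d = Rc γ x d b := by
  have hpair : ∀ i j, RL γ x i d j b = RL γ x j b i d :=
    fun i j => RL_pair hV hγC hγpos hγsymm hx i d j b
  have hgi : ∀ u v, gi γ x u v = gi γ x v u := gi_symm (fun u v => hγsymm x hx u v)
  simp only [Rc, Rm_eq hγpos x hx, Fin.sum_univ_three]
  simp only [hpair]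
  simp only [hgi]
  ring

end QuadZero

end CodacciAux

open CodacciAux in
/-- A symmetric tensor field `Q` satisfying the Codacci equation
`D_[a Q^c_b] = 0` on a Riemannian 3-manifold (given here in local
coordinates on an open set `V ⊆ ℝ³` via its metric `γ`, inverse metric
`γinv`, Levi-Civita Christoffel symbols `Γ` and Ricci tensor `Ric`)
commutes with the Ricci tensor as an endomorphism of each tangent space. -/
theorem codacci_tensor_commutes_with_ricci
    (V : Set (Fin 3 → ℝ)) (hV : IsOpen V)
    (γ γinv Q Ric : (Fin 3 → ℝ) → Fin 3 → Fin 3 → ℝ)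
    (Γ : (Fin 3 → ℝ) → Fin 3 → Fin 3 → Fin 3 → ℝ)
    (Qmix Ricmix : (Fin 3 → ℝ) → Fin 3 → Fin 3 → ℝ)
    -- smoothness
    (hγC : ∀ a b, ContDiffOn ℝ (⊤ : ℕ∞) (fun x => γ x a b) V)
    (hQC : ∀ a b, ContDiffOn ℝ (⊤ : ℕ∞) (fun x => Q x a b) V)
    -- the metric is symmetric and positive definite, with inverse `γinv`
    (hγsymm : ∀ x ∈ V, ∀ a b, γ x a b = γ x b a)
    (hγpos : ∀ x ∈ V, Matrix.PosDef (Matrix.of (γ x)))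
    (hγinv : ∀ x ∈ V, ∀ a b,
      ∑ c, γ x a c * γinv x c b = if a = b then (1 : ℝ) else 0)
    -- `Γ` are the Christoffel symbols of the Levi-Civita connection of `γ`
    (hΓ : ∀ x ∈ V, ∀ c a b, Γ x c a b =
      (1 / 2) * ∑ d, γinv x c d *
        (pd (fun y => γ y d b) a x + pd (fun y => γ y d a) b x
          - pd (fun y => γ y a b) d x))
    -- `Ric` is the Ricci tensor of `γ`
    (hRic : ∀ x ∈ V, ∀ b d, Ric x b d =
      ∑ a, (pd (fun y => Γ y a d b) a x - pd (fun y => Γ y a a b) d x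
        + ∑ e, (Γ x a a e * Γ x e d b - Γ x a d e * Γ x e a b)))
    -- `Q` is symmetric
    (hQsymm : ∀ x ∈ V, ∀ a b, Q x a b = Q x b a)
    -- mixed (index-raised) versions of `Q` and `Ric`
    (hQmix : ∀ x, ∀ a b, Qmix x a b = ∑ d, γinv x a d * Q x d b)
    (hRicmix : ∀ x, ∀ a b, Ricmix x a b = ∑ d, γinv x a d * Ric x d b)
    -- the Codacci equation `D_a Q^b_c = D_c Q^b_a`
    (hCodacci : ∀ x ∈ V, ∀ a b c,
      pd (fun y => Qmix y b c) a x
        + ∑ e, (Γ x b a e * Qmix x e c - Γ x e a c * Qmix x b e) =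
      pd (fun y => Qmix y b a) c x
        + ∑ e, (Γ x b c e * Qmix x e a - Γ x e c a * Qmix x b e)) :
    -- conclusion: `R^a_b Q^b_c = Q^a_b R^b_c`
    ∀ x ∈ V, ∀ a c,
      ∑ b, Ricmix x a b * Qmix x b c = ∑ b, Qmix x a b * Ricmix x b c := by
  intro x hx a c
  have hγC' : ∀ a b, ContDiffOn ℝ ∞ (fun y => γ y a b) V := fun a b => (hγC a b).of_le (by simp)
  have hQC' : ∀ a b, ContDiffOn ℝ ∞ (fun y => Q y a b) V := fun a b => (hQC a b).of_le (by simp)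
  have hScS := Sc_symmetric hV hγinv hΓ hQmix hCodacci
  have hcontr : ∀ u w, (∑ e, Rc γ x e u * qq γ Q x e w) = (∑ e, Rc γ x e w * qq γ Q x e u) := by
    intro u w
    have h := contraction hV hγC' hQC' hγpos hγsymm hScS hx u w
    rw [quad_zero hV hγC' hγpos hγsymm hQsymm hx u w] at h
    linarith
  have htgi := tr_gi hγinv x hx
  have htqq := tr_qq hγinv hQmix x hx
  have htRc := tr_Rc hV hγinv hΓ hRic x hx
  have hRcS := Rc_symm hV hγC' hγpos hγsymm hx
  have hgi : ∀ u v, gi γ x u v = gi γ x v u := gi_symm (fun u v => hγsymm x hx u v)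
  have hQs : ∀ u v, Q x u v = Q x v u := fun u v => hQsymm x hx u v
  have hc0 := hcontr 0 c
  have hc1 := hcontr 1 c
  have hc2 := hcontr 2 c
  simp only [hRicmix, htqq, htgi, htRc, Fin.sum_univ_three] at *
  simp only [qq, Fin.sum_univ_three] at hc0 hc1 hc2 ⊢
  simp only [hRcS, hgi, hQs] at hc0 hc1 hc2 ⊢
  linear_combination gi γ x a 0 * hc0 + gi γ x a 1 * hc1 + gi γ x a 2 * hc2
end
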